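/- Let m̄, m̿ and m* be finite MDP models over the same finite state space S, finite action space A, and discount factor γ ∈ [0,1). Let π_{m̄}^r be a rollout policy of some base policy in m̄, let π_{m̄}^ce be a certainty-equivalence policy in m̄, and let π_{m̿}^r, π_{m̿}^ce be defined analogously for m̿. If m̿ is a performance-maximizing model (PXM) of m* with respect to Π̿ = {π_{m̿}^r, π_{m̿}^ce} and J, then J_{m*}^{π_{m̿}^ce} ≥ J_{m*}^{π_{m̄}^r} (in particular, this holds whether m̄ is a PCM or a PRM of m* with respect to Π̄ = {π_{m̄}^r, π_{m̄}^ce} and J). -/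

import Mathlib

/-- A finite Markov decision process model over state space `S` and action space `A`:
a transition kernel `p`, a reward function `r`, and an initial state distribution `d`. -/
structure MDP (S A : Type) where
  p : S → A → PMF S
  r : S → A → S → ℝ
  d : PMF S

variable {S A : Type}

/-- The expected one-step value `Σ_{s'} p(s,a)(s') (r(s,a,s') + γ V(s'))`. -/
noncomputable def expVal [Fintype S] (m : MDP S A) (γ : ℝ) (V : S → ℝ) (s : S) (a : A) : ℝ :=
  ∑ s' : S, (m.p s a s').toReal * (m.r s a s' + γ * V s')

/-- The Bellman evaluation operator `T_m^π` of policy `π` in model `m`. -/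
noncomputable def bellman [Fintype S] [Fintype A] (m : MDP S A) (γ : ℝ)
    (π : S → PMF A) (V : S → ℝ) (s : S) : ℝ :=
  ∑ a : A, (π s a).toReal * expVal m γ V s a

/-- `V` is the value function `V_m^π`, i.e. a fixed point of the Bellman evaluation
operator `T_m^π` (which is unique since `T_m^π` is a `γ`-contraction for `γ < 1`). -/
def IsValueFun [Fintype S] [Fintype A] (m : MDP S A) (γ : ℝ) (π : S → PMF A)
    (V : S → ℝ) : Prop :=
  ∀ s, bellman m γ π V s = V s

/-- The optimal Bellman operator `T_m^*`. -/
noncomputable def optBellman [Fintype S] [Fintype A] [Nonempty A] (m : MDP S A) (γ : ℝ)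
    (V : S → ℝ) (s : S) : ℝ :=
  Finset.univ.sup' Finset.univ_nonempty (fun a : A => expVal m γ V s a)

/-- `V` is the optimal value function `V_m^*`, i.e. a fixed point of `T_m^*`. -/
def IsOptValueFun [Fintype S] [Fintype A] [Nonempty A] (m : MDP S A) (γ : ℝ)
    (V : S → ℝ) : Prop :=
  ∀ s, optBellman m γ V s = V s

/-- The performance `J_m^π = Σ_s d(s) V_m^π(s)`, expressed via the value function `V` of `π`. -/
noncomputable def Jval [Fintype S] (m : MDP S A) (V : S → ℝ) : ℝ :=
  ∑ s : S, (m.d s).toReal * V s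

/-- The deterministic (stochastic) policy induced by a map `S → A`. -/
noncomputable def detPol (f : S → A) : S → PMF A := fun s => PMF.pure (f s)

/-- A deterministic policy `g` is greedy with respect to the one-step values induced by `V`
in model `m`: at each state it picks a maximizing action.  With `V = V_m^{π^b}` this says `g`
is a rollout policy of `π^b`; with `V = V_m^*` this says `g` is a certainty-equivalence policy. -/
def IsGreedyWrt [Fintype S] (m : MDP S A) (γ : ℝ) (V : S → ℝ) (g : S → A) : Prop :=
  ∀ s a, expVal m γ V s a ≤ expVal m γ V s (g s)

/-- `m` is a performance-contrasting model (PCM) of `mstar` w.r.t. a set `P` of policies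
and `J`: whenever `J_m^{πi} ≥ J_m^{πj}` for `πi, πj ∈ P`, we have `J_{m*}^{πi} ≤ J_{m*}^{πj}`. -/
def IsPCM [Fintype S] [Fintype A] (m mstar : MDP S A) (γ : ℝ)
    (P : Set (S → PMF A)) : Prop :=
  ∀ πi ∈ P, ∀ πj ∈ P, ∀ Vi Vj Wi Wj : S → ℝ,
    IsValueFun m γ πi Vi → IsValueFun m γ πj Vj →
    IsValueFun mstar γ πi Wi → IsValueFun mstar γ πj Wj →
    Jval m Vi ≥ Jval m Vj → Jval mstar Wi ≤ Jval mstar Wj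

/-- `m` is a performance-resembling model (PRM) of `mstar` w.r.t. a set `P` of policies
and `J`: whenever `J_m^{πi} ≥ J_m^{πj}` for `πi, πj ∈ P`, we have `J_{m*}^{πi} ≥ J_{m*}^{πj}`. -/
def IsPRM [Fintype S] [Fintype A] (m mstar : MDP S A) (γ : ℝ)
    (P : Set (S → PMF A)) : Prop :=
  ∀ πi ∈ P, ∀ πj ∈ P, ∀ Vi Vj Wi Wj : S → ℝ,
    IsValueFun m γ πi Vi → IsValueFun m γ πj Vj →
    IsValueFun mstar γ πi Wi → IsValueFun mstar γ πj Wj →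
    Jval m Vi ≥ Jval m Vj → Jval mstar Wi ≥ Jval mstar Wj

/-- A policy `π` is optimal in `m` if its value function coincides with `V_m^*`. -/
def IsOptimalIn [Fintype S] [Fintype A] [Nonempty A] (m : MDP S A) (γ : ℝ)
    (π : S → PMF A) : Prop :=
  ∀ V Vstar : S → ℝ, IsValueFun m γ π V → IsOptValueFun m γ Vstar → ∀ s, V s = Vstar s

/-- `m` is a performance-minimizing model (PNM) of `mstar` w.r.t. `P` and `J`: a PCM such
that every policy in `P` optimal in `m` attains the worst possible performance in `mstar`. -/
def IsPNM [Fintype S] [Fintype A] [Nonempty A] (m mstar : MDP S A) (γ : ℝ)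
    (P : Set (S → PMF A)) : Prop :=
  IsPCM m mstar γ P ∧
    ∀ π ∈ P, IsOptimalIn m γ π →
      ∀ (π' : S → PMF A) (W W' : S → ℝ),
        IsValueFun mstar γ π W → IsValueFun mstar γ π' W' →
        Jval mstar W ≤ Jval mstar W'

/-- `m` is a performance-maximizing model (PXM) of `mstar` w.r.t. `P` and `J`: a PRM such
that every policy in `P` optimal in `m` attains the best possible performance in `mstar`. -/
def IsPXM [Fintype S] [Fintype A] [Nonempty A] (m mstar : MDP S A) (γ : ℝ)
    (P : Set (S → PMF A)) : Prop :=
  IsPRM m mstar γ P ∧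
    ∀ π ∈ P, IsOptimalIn m γ π →
      ∀ (π' : S → PMF A) (W W' : S → ℝ),
        IsValueFun mstar γ π W → IsValueFun mstar γ π' W' →
        Jval mstar W ≥ Jval mstar W'

/-! Both Bellman operators are `γ`-contractions in the sup norm, so each has exactly one fixed
point. A certainty-equivalence policy is greedy with respect to `V_m^*`, so `V_m^*` is also its
value function, and it is therefore optimal in `m`. For `m = m̿` the PXM property then makes it
at least as good in `m*` as every policy, in particular as the rollout policy of `m̄`. -/

open Finset

theorem PMF.sum_toReal_eq_one {α : Type*} [Fintype α] (p : PMF α) : ∑ a, (p a).toReal = 1 := by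
  rw [← ENNReal.toReal_sum fun a _ => p.apply_ne_top a, ← tsum_fintype (L := .unconditional α),
    p.tsum_coe, ENNReal.toReal_one]

theorem PMF.abs_sum_toReal_mul_le {α : Type*} [Fintype α] (p : PMF α) {f : α → ℝ} {M : ℝ}
    (hf : ∀ a, |f a| ≤ M) : |∑ a, (p a).toReal * f a| ≤ M :=
  calc |∑ a, (p a).toReal * f a| ≤ ∑ a, |(p a).toReal * f a| := abs_sum_le_sum_abs _ _
    _ ≤ ∑ a, (p a).toReal * M := by
      gcongr with a
      rw [abs_mul, abs_of_nonneg ENNReal.toReal_nonneg]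
      exact mul_le_mul_of_nonneg_left (hf a) ENNReal.toReal_nonneg
    _ = M := by rw [← sum_mul, p.sum_toReal_eq_one, one_mul]

theorem Finset.abs_sup'_sub_sup'_le {ι : Type*} {s : Finset ι} (hs : s.Nonempty) {f g : ι → ℝ}
    {C : ℝ} (hfg : ∀ i ∈ s, |f i - g i| ≤ C) : |s.sup' hs f - s.sup' hs g| ≤ C := by
  rw [abs_sub_le_iff, sub_le_iff_le_add, sub_le_iff_le_add]
  constructor
  · refine sup'_le hs f fun i hi => ?_
    linarith [le_sup' g hi, (abs_le.1 (hfg i hi)).2]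
  · refine sup'_le hs g fun i hi => ?_
    linarith [le_sup' f hi, (abs_le.1 (hfg i hi)).1]

section Contraction

variable [Fintype S] (m : MDP S A) {γ : ℝ}

theorem abs_expVal_sub_le (hγ : 0 ≤ γ) (V W : S → ℝ) (s : S) (a : A) :
    |expVal m γ V s a - expVal m γ W s a| ≤ γ * dist V W := by
  have hsub : expVal m γ V s a - expVal m γ W s a
      = ∑ s', (m.p s a s').toReal * (γ * (V s' - W s')) := by
    simp only [expVal, ← sum_sub_distrib, ← mul_sub]
    congr! 2
    ring
  rw [hsub]
  refine (m.p s a).abs_sum_toReal_mul_le fun s' => ?_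
  rw [abs_mul, abs_of_nonneg hγ, ← Real.dist_eq]
  exact mul_le_mul_of_nonneg_left (dist_le_pi_dist V W s') hγ

theorem contractingWith_bellman [Fintype A] (hγ0 : 0 ≤ γ) (hγ1 : γ < 1) (π : S → PMF A) :
    ContractingWith ⟨γ, hγ0⟩ (bellman m γ π) := by
  refine ⟨hγ1, LipschitzWith.of_dist_le_mul fun V W => ?_⟩
  refine (dist_pi_le_iff (by positivity)).2 fun s => ?_
  have hsub : bellman m γ π V s - bellman m γ π W s
      = ∑ a, (π s a).toReal * (expVal m γ V s a - expVal m γ W s a) := by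
    simp only [bellman, ← sum_sub_distrib, ← mul_sub]
  rw [Real.dist_eq, hsub]
  exact (π s).abs_sum_toReal_mul_le fun a => abs_expVal_sub_le m hγ0 V W s a

theorem contractingWith_optBellman [Fintype A] [Nonempty A] (hγ0 : 0 ≤ γ) (hγ1 : γ < 1) :
    ContractingWith ⟨γ, hγ0⟩ (optBellman m γ) := by
  refine ⟨hγ1, LipschitzWith.of_dist_le_mul fun V W => ?_⟩
  refine (dist_pi_le_iff (by positivity)).2 fun s => ?_
  rw [Real.dist_eq]
  exact abs_sup'_sub_sup'_le _ fun a _ => abs_expVal_sub_le m hγ0 V W s a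

end Contraction

section Optimality

variable [Fintype S] [Fintype A] {m : MDP S A} {γ : ℝ}

theorem IsValueFun.unique (hγ0 : 0 ≤ γ) (hγ1 : γ < 1) {π : S → PMF A} {V W : S → ℝ}
    (hV : IsValueFun m γ π V) (hW : IsValueFun m γ π W) : V = W :=
  (contractingWith_bellman m hγ0 hγ1 π).fixedPoint_unique' (funext hV) (funext hW)

theorem IsOptValueFun.unique [Nonempty A] (hγ0 : 0 ≤ γ) (hγ1 : γ < 1) {V W : S → ℝ}
    (hV : IsOptValueFun m γ V) (hW : IsOptValueFun m γ W) : V = W :=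
  (contractingWith_optBellman m hγ0 hγ1).fixedPoint_unique' (funext hV) (funext hW)

theorem bellman_detPol (π : S → A) (V : S → ℝ) (s : S) :
    bellman m γ (detPol π) V s = expVal m γ V s (π s) := by
  rw [bellman, sum_eq_single (π s) (fun a _ ha => by simp [detPol, ha]) (by simp)]
  simp [detPol]

theorem IsGreedyWrt.isValueFun_detPol [Nonempty A] {V : S → ℝ} {π : S → A}
    (hg : IsGreedyWrt m γ V π) (hV : IsOptValueFun m γ V) : IsValueFun m γ (detPol π) V :=
  fun s => by
    rw [bellman_detPol, ← hV s, optBellman]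
    exact le_antisymm (le_sup' _ (mem_univ _)) (sup'_le _ _ fun a _ => hg s a)

theorem IsGreedyWrt.isOptimalIn_detPol [Nonempty A] (hγ0 : 0 ≤ γ) (hγ1 : γ < 1)
    {V : S → ℝ} {π : S → A} (hg : IsGreedyWrt m γ V π) (hV : IsOptValueFun m γ V) :
    IsOptimalIn m γ (detPol π) := fun W Vstar hW hVstar s => by
  rw [hW.unique hγ0 hγ1 (hg.isValueFun_detPol hV), hV.unique hγ0 hγ1 hVstar]

end Optimality

theorem pxm_ce_ge_rollout_general
    {S A : Type} [Fintype S] [Fintype A] [Nonempty A]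
    (mbb mstar : MDP S A) (γ : ℝ) (hγ0 : 0 ≤ γ) (hγ1 : γ < 1)
    -- rollout policy of some base policy in `m̄`
    (πr1 : S → A)
    -- rollout policy of some base policy in `m̿`
    (πr2 : S → A)
    -- certainty-equivalence policy in `m̿`
    (Vstar2 : S → ℝ) (hVstar2 : IsOptValueFun mbb γ Vstar2)
    (πce2 : S → A) (hπce2 : IsGreedyWrt mbb γ Vstar2 πce2)
    -- `m̿` is a PXM of `mstar` w.r.t. `Π̿ = {π_{m̿}^r, π_{m̿}^ce}` and `J`
    (hPXM : IsPXM mbb mstar γ {detPol πr2, detPol πce2})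
    -- value functions in `mstar` of `π_{m̄}^r` and `π_{m̿}^ce`
    (Wr1 Wce2 : S → ℝ)
    (hWr1 : IsValueFun mstar γ (detPol πr1) Wr1)
    (hWce2 : IsValueFun mstar γ (detPol πce2) Wce2) :
    Jval mstar Wce2 ≥ Jval mstar Wr1 :=
  hPXM.2 (detPol πce2) (Set.mem_insert_of_mem _ rfl)
    (hπce2.isOptimalIn_detPol hγ0 hγ1 hVstar2) (detPol πr1) Wce2 Wr1 hWce2 hWr1

/-- **Proposition 4.** If `m̿` is a PXM of `m*` with respect to
`Π̿ = {π_{m̿}^r, π_{m̿}^ce}` and `J`, then `J_{m*}^{π_{m̿}^ce} ≥ J_{m*}^{π_{m̄}^r}`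
(in particular, this holds whether `m̄` is a PCM or a PRM of `m*`
w.r.t. `Π̄ = {π_{m̄}^r, π_{m̄}^ce}` and `J`). -/
theorem pxm_ce_ge_rollout
    {S A : Type} [Fintype S] [Nonempty S] [Fintype A] [Nonempty A]
    (mbar mbb mstar : MDP S A) (γ : ℝ) (hγ0 : 0 ≤ γ) (hγ1 : γ < 1)
    -- rollout policy of some base policy in `m̄`
    (πb1 : S → PMF A) (Vb1 : S → ℝ) (hVb1 : IsValueFun mbar γ πb1 Vb1)
    (πr1 : S → A) (hπr1 : IsGreedyWrt mbar γ Vb1 πr1)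
    -- certainty-equivalence policy in `m̄`
    (Vstar1 : S → ℝ) (hVstar1 : IsOptValueFun mbar γ Vstar1)
    (πce1 : S → A) (hπce1 : IsGreedyWrt mbar γ Vstar1 πce1)
    -- rollout policy of some base policy in `m̿`
    (πb2 : S → PMF A) (Vb2 : S → ℝ) (hVb2 : IsValueFun mbb γ πb2 Vb2)
    (πr2 : S → A) (hπr2 : IsGreedyWrt mbb γ Vb2 πr2)
    -- certainty-equivalence policy in `m̿`
    (Vstar2 : S → ℝ) (hVstar2 : IsOptValueFun mbb γ Vstar2)
    (πce2 : S → A) (hπce2 : IsGreedyWrt mbb γ Vstar2 πce2)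
    -- `m̿` is a PXM of `mstar` w.r.t. `Π̿ = {π_{m̿}^r, π_{m̿}^ce}` and `J`
    (hPXM : IsPXM mbb mstar γ {detPol πr2, detPol πce2})
    -- value functions in `mstar` of `π_{m̄}^r` and `π_{m̿}^ce`
    (Wr1 Wce2 : S → ℝ)
    (hWr1 : IsValueFun mstar γ (detPol πr1) Wr1)
    (hWce2 : IsValueFun mstar γ (detPol πce2) Wce2) :
    Jval mstar Wce2 ≥ Jval mstar Wr1 :=
  pxm_ce_ge_rollout_general mbb mstar γ hγ0 hγ1 πr1 πr2 Vstar2 hVstar2 πce2 hπce2 hPXM Wr1 Wce2 hWr1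
    hWce2
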